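/- Let λ > 0 and η₀ > 0. Then there exist constants C = C(λ,η₀) > 0 and C₄ = C₄(λ,η₀) > 0 such that for all η ∈ ℝ with |η| ≥ η₀ and all x ∈ ℝ³∖{0}: |Γ_H^{η,λ}(x)| ≤ C |x|^{−1} e^{−C₄ |η|^{1/2} |x|} and |∇Γ_H^{η,λ}(x)| ≤ C (|x|^{−2} + |η|^{1/2}|x|^{−1}) e^{−C₄ |η|^{1/2} |x|}. -/

import Mathlib

open MeasureTheory Real Set

noncomputable section

/-- Three-dimensional Euclidean space. -/
abbrev E3 : Type := EuclideanSpace ℝ (Fin 3)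

/-- The wake function `s(x) = |x| + x₁`. -/
def wake (x : E3) : ℝ := ‖x‖ + x 0

/-- The `j`-th standard basis vector of `ℝ³`. -/
def e3 (j : Fin 3) : E3 := EuclideanSpace.single j 1

/-- Euclidean norm of a triple of reals. -/
def vnorm (v : Fin 3 → ℝ) : ℝ := Real.sqrt (∑ i, v i ^ 2)

/-- The square root of `z ∈ ℂ` with positive imaginary part
(well defined whenever `z ∉ ℝ≥0`, in particular for `z = −μ`, `μ = (λ/2)² + iη`, `η ≠ 0`). -/
def sqrtPosIm (z : ℂ) : ℂ :=
  if 0 < (z ^ ((1:ℂ)/2)).im then z ^ ((1:ℂ)/2) else -(z ^ ((1:ℂ)/2))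

/-- The fundamental solution `Γ_H^{η,λ}(x) = (4π|x|)⁻¹ e^{i√(−μ)|x| − (λ/2)x₁}`,
`μ = (λ/2)² + iη`, of `iηv − Δv − λ∂₁v = f` on `ℝ³`. -/
def GammaH (lam η : ℝ) (x : E3) : ℂ :=
  ((4 * Real.pi * ‖x‖ : ℝ) : ℂ)⁻¹ *
    Complex.exp (Complex.I * sqrtPosIm (-(((lam / 2) ^ 2 : ℂ) + η * Complex.I)) * (‖x‖ : ℂ)
      - ((lam / 2 : ℝ) : ℂ) * ((x 0 : ℝ) : ℂ))


/-! With `ζ := √(−μ)` one has `Γ_H(x) = (4π)⁻¹ |x|⁻¹ e^{iζ|x| − (λ/2)x₁}`, so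
`|Γ_H(x)| ≤ (4π|x|)⁻¹ e^{−(Im ζ − λ/2)|x|}`, and the product and chain rules give
`|∇Γ_H(x)| ≤ (4π)⁻¹ (|x|⁻² + (|ζ| + λ/2)|x|⁻¹) e^{−(Im ζ − λ/2)|x|}`.
It remains to control `ζ = A + iB` for `|η| ≥ η₀`. With `M² = (λ/2)²/η₀ + 1`, the bound
`|ζ|² = |μ| ≤ (λ/2)² + |η| ≤ M²|η|` gives `|ζ| + λ/2 ≤ 2M|η|^{1/2}`. The relations
`B² − A² = (λ/2)²` and `2AB = −η` give `8B³(B − λ/2) ≥ 4B²(B² − (λ/2)²) = 4A²B² = η²`,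
and `B ≤ M|η|^{1/2}` turns this into `B − λ/2 ≥ |η|^{1/2} / (8M³)`. -/

lemma sqrtPosIm_sq (z : ℂ) : sqrtPosIm z ^ 2 = z := by
  unfold sqrtPosIm
  split_ifs <;> simp

lemma sqrtPosIm_im_pos {z : ℂ} (hz : z.im ≠ 0) : 0 < (sqrtPosIm z).im := by
  have hw : (z ^ ((1:ℂ)/2)).im ≠ 0 := by
    intro him
    apply hz
    rw [← Complex.cpow_ofNat_inv_pow z 2, ← one_div, sq, Complex.mul_im, him]
    ring
  unfold sqrtPosIm
  split_ifs with hpos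
  · exact hpos
  · rw [Complex.neg_im]
    exact neg_pos.2 (lt_of_le_of_ne (not_lt.1 hpos) hw)

section SquareRoot

variable {a η : ℝ} {ζ : ℂ}

lemma norm_sq_le_of_sq_eq (hζ : ζ ^ 2 = -((a : ℂ) ^ 2 + η * Complex.I)) :
    ‖ζ‖ ^ 2 ≤ a ^ 2 + |η| :=
  calc ‖ζ‖ ^ 2 = ‖(a : ℂ) ^ 2 + η * Complex.I‖ := by rw [← norm_pow, hζ, norm_neg]
    _ ≤ ‖(a : ℂ) ^ 2‖ + ‖η * Complex.I‖ := norm_add_le _ _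
    _ = a ^ 2 + |η| := by simp

lemma sqrt_abs_div_le_im_sub (ha : 0 ≤ a) (hζ : ζ ^ 2 = -((a : ℂ) ^ 2 + η * Complex.I))
    (him : 0 < ζ.im) {M : ℝ} (hM : ‖ζ‖ ≤ M * √|η|) :
    √|η| / (8 * M ^ 3) ≤ ζ.im - a := by
  set s := √|η|
  set B := ζ.im
  have hre : ζ.re ^ 2 - B ^ 2 = -a ^ 2 := by
    simpa [sq, ← Complex.ofReal_pow] using congrArg Complex.re hζ
  have hη : ζ.re * B + B * ζ.re = -η := by
    simpa [sq] using congrArg Complex.im hζ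
  have hs : 0 ≤ s := Real.sqrt_nonneg _
  have hs4 : s ^ 4 = η ^ 2 := by
    rw [show s ^ 4 = (s ^ 2) ^ 2 by ring, Real.sq_sqrt (abs_nonneg η), sq_abs]
  have hBM : B ≤ M * s := (Complex.im_le_norm ζ).trans hM
  have hMs : 0 < M * s := him.trans_le hBM
  have hM0 : 0 < M := pos_of_mul_pos_left hMs hs
  have hs0 : 0 < s := pos_of_mul_pos_right hMs hM0.le
  have haB : a ≤ B := by nlinarith
  have key : s ^ 4 ≤ 8 * (M * s) ^ 3 * (B - a) := by
    have h1 : s ^ 4 = 4 * B ^ 2 * (B - a) * (B + a) := by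
      linear_combination hs4 + (η - 2 * ζ.re * B) * hη + 4 * B ^ 2 * hre
    have h2 : B ^ 3 ≤ (M * s) ^ 3 := pow_le_pow_left₀ him.le hBM 3
    nlinarith [mul_le_mul_of_nonneg_right h2 (sub_nonneg.2 haB), sub_nonneg.2 haB]
  rw [div_le_iff₀ (by positivity)]
  nlinarith [pow_pos hs0 3]

end SquareRoot

def sqrtNegMu (lam η : ℝ) : ℂ := sqrtPosIm (-(((lam / 2 : ℝ) : ℂ) ^ 2 + η * Complex.I))

lemma exists_sqrtNegMu_bounds {lam η₀ : ℝ} (hlam : 0 ≤ lam) (hη₀ : 0 < η₀) :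
    ∃ M > 0, ∀ η : ℝ, η₀ ≤ |η| →
      ‖sqrtNegMu lam η‖ + lam / 2 ≤ 2 * M * √|η| ∧
      √|η| / (8 * M ^ 3) ≤ (sqrtNegMu lam η).im - lam / 2 := by
  set a := lam / 2
  have ha : 0 ≤ a := by positivity
  refine ⟨√(a ^ 2 / η₀ + 1), Real.sqrt_pos.2 (by positivity), fun η hη => ?_⟩
  set M := √(a ^ 2 / η₀ + 1)
  set ζ := sqrtNegMu lam η
  have hζ : ζ ^ 2 = -((a : ℂ) ^ 2 + η * Complex.I) := sqrtPosIm_sq _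
  have hMη : (M * √|η|) ^ 2 = a ^ 2 * (|η| / η₀) + |η| := by
    rw [mul_pow, Real.sq_sqrt (by positivity), Real.sq_sqrt (abs_nonneg η)]
    field_simp
  have hη₀η : 1 ≤ |η| / η₀ := (one_le_div hη₀).2 hη
  have hζM : ‖ζ‖ ≤ M * √|η| := by
    refine (pow_le_pow_iff_left₀ (norm_nonneg ζ) (by positivity) two_ne_zero).1 ?_
    nlinarith [norm_sq_le_of_sq_eq hζ, sq_nonneg a]
  have haM : a ≤ M * √|η| := by
    refine (pow_le_pow_iff_left₀ ha (by positivity) two_ne_zero).1 ?_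
    nlinarith [sq_nonneg a, abs_nonneg η]
  have him : 0 < ζ.im := sqrtPosIm_im_pos <| by
    simpa [sq] using abs_pos.1 (hη₀.trans_le hη)
  exact ⟨by linarith, sqrt_abs_div_le_im_sub ha hζ him hζM⟩

lemma norm_fderiv_norm_le_one {E : Type*} [NormedAddCommGroup E] [NormedSpace ℝ E] (x : E) :
    ‖fderiv ℝ (‖·‖) x‖ ≤ 1 := by
  simpa using norm_fderiv_le_of_lipschitz ℝ (x₀ := x) lipschitzWith_one_norm

lemma norm_cexp_I_mul_norm_add_le {E : Type*} [NormedAddCommGroup E] [NormedSpace ℝ E] (ζ : ℂ)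
    (ℓ : E →L[ℝ] ℂ) (y : E) :
    ‖Complex.exp (Complex.I * ζ * ‖y‖ + ℓ y)‖ ≤ Real.exp (-(ζ.im - ‖ℓ‖) * ‖y‖) := by
  have hre : (Complex.I * ζ * ‖y‖ + ℓ y).re = -(ζ.im * ‖y‖) + (ℓ y).re := by simp
  rw [Complex.norm_exp, Real.exp_le_exp, hre]
  linarith [(Complex.re_le_norm (ℓ y)).trans (ℓ.le_opNorm y)]

section Kernel

variable {E : Type*} [NormedAddCommGroup E] [InnerProductSpace ℝ E] {x : E}

lemma hasFDerivAt_inv_norm (hx : x ≠ 0) :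
    HasFDerivAt (fun y : E => ‖y‖⁻¹) ((-(‖x‖ ^ 2)⁻¹) • fderiv ℝ (‖·‖) x) x :=
  (hasDerivAt_inv (norm_ne_zero_iff.2 hx)).comp_hasFDerivAt x
    ((contDiffAt_norm ℝ hx).differentiableAt one_ne_zero).hasFDerivAt

lemma norm_fderiv_inv_norm_smul_cexp_le {φ : E → ℂ} {φ' : E →L[ℝ] ℂ} (hφ : HasFDerivAt φ φ' x)
    (hx : x ≠ 0) :
    ‖fderiv ℝ (fun y => ‖y‖⁻¹ • Complex.exp (φ y)) x‖ ≤
      ((‖x‖ ^ 2)⁻¹ + ‖φ'‖ * ‖x‖⁻¹) * ‖Complex.exp (φ x)‖ := by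
  rw [((hasFDerivAt_inv_norm hx).fun_smul hφ.cexp).fderiv]
  calc _ ≤ ‖x‖⁻¹ * (‖Complex.exp (φ x)‖ * ‖φ'‖) + ((‖x‖ ^ 2)⁻¹ * 1) * ‖Complex.exp (φ x)‖ := by
          refine norm_add_le_of_le ?_ ?_
          · rw [norm_smul, norm_smul, norm_inv, norm_norm]
          · rw [ContinuousLinearMap.norm_smulRight_apply, norm_smul, norm_neg, norm_inv, norm_pow,
              norm_norm]
            gcongr
            exact norm_fderiv_norm_le_one x
    _ = _ := by ring

lemma hasFDerivAt_mul_norm_add (w : ℂ) (ℓ : E →L[ℝ] ℂ) (hx : x ≠ 0) :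
    HasFDerivAt (fun y => w * ‖y‖ + ℓ y)
      (w • Complex.ofRealCLM.comp (fderiv ℝ (‖·‖) x) + ℓ) x :=
  ((Complex.ofRealCLM.hasFDerivAt.comp x
    ((contDiffAt_norm ℝ hx).differentiableAt one_ne_zero).hasFDerivAt).const_mul w).add
    ℓ.hasFDerivAt

theorem norm_fderiv_yukawa_le (w : ℂ) (ℓ : E →L[ℝ] ℂ) (hx : x ≠ 0) :
    ‖fderiv ℝ (fun y => ‖y‖⁻¹ • Complex.exp (w * ‖y‖ + ℓ y)) x‖ ≤
      ((‖x‖ ^ 2)⁻¹ + (‖w‖ + ‖ℓ‖) * ‖x‖⁻¹) * ‖Complex.exp (w * ‖x‖ + ℓ x)‖ := by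
  have hφ' : ‖w • Complex.ofRealCLM.comp (fderiv ℝ (‖·‖) x) + ℓ‖ ≤ ‖w‖ + ‖ℓ‖ := by
    refine norm_add_le_of_le ((ContinuousLinearMap.opNorm_smul_le _ _).trans ?_) le_rfl
    refine mul_le_of_le_one_right (norm_nonneg w)
      ((ContinuousLinearMap.opNorm_comp_le _ _).trans ?_)
    rw [Complex.ofRealCLM_norm, one_mul]
    exact norm_fderiv_norm_le_one x
  refine (norm_fderiv_inv_norm_smul_cexp_le (hasFDerivAt_mul_norm_add w ℓ hx) hx).trans ?_
  gcongr

end Kernel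

lemma norm_proj_smulRight_le {ι : Type*} [Fintype ι] (i : ι) (c : ℂ) :
    ‖(EuclideanSpace.proj i : EuclideanSpace ℝ ι →L[ℝ] ℝ).smulRight c‖ ≤ ‖c‖ := by
  rw [ContinuousLinearMap.norm_smulRight_apply]
  refine mul_le_of_le_one_left (norm_nonneg c) ?_
  exact ContinuousLinearMap.opNorm_le_bound _ zero_le_one fun v => by
    simpa using PiLp.norm_apply_le v i

/-- The drift term `y ↦ -(λ/2) y₁` of the exponent of `Γ_H`. -/
def driftH (lam : ℝ) : E3 →L[ℝ] ℂ :=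
  (EuclideanSpace.proj (0 : Fin 3) : E3 →L[ℝ] ℝ).smulRight (-((lam / 2 : ℝ) : ℂ))

lemma norm_driftH_le {lam : ℝ} (hlam : 0 ≤ lam) : ‖driftH lam‖ ≤ lam / 2 :=
  (norm_proj_smulRight_le _ _).trans_eq (by simp [abs_of_nonneg hlam])

lemma GammaH_eq_smul (lam η : ℝ) :
    GammaH lam η = (4 * π)⁻¹ • fun y : E3 =>
      ‖y‖⁻¹ • Complex.exp (Complex.I * sqrtNegMu lam η * ‖y‖ + driftH lam y) := by
  funext y
  simp only [GammaH, sqrtNegMu, driftH, Pi.smul_apply, Complex.real_smul,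
    ContinuousLinearMap.smulRight_apply, PiLp.proj_apply]
  push_cast
  ring_nf

section GammaH

variable {lam : ℝ} (η : ℝ)

lemma norm_cexp_GammaH_exponent_le (hlam : 0 ≤ lam) (y : E3) :
    ‖Complex.exp (Complex.I * sqrtNegMu lam η * ‖y‖ + driftH lam y)‖ ≤
      Real.exp (-((sqrtNegMu lam η).im - lam / 2) * ‖y‖) := by
  refine (norm_cexp_I_mul_norm_add_le _ _ y).trans ?_
  gcongr
  exact norm_driftH_le hlam

lemma norm_GammaH_le (hlam : 0 ≤ lam) (x : E3) :
    ‖GammaH lam η x‖ ≤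
      (4 * π)⁻¹ * ‖x‖⁻¹ * Real.exp (-((sqrtNegMu lam η).im - lam / 2) * ‖x‖) := by
  rw [GammaH_eq_smul, Pi.smul_apply, norm_smul, norm_smul, Real.norm_of_nonneg (by positivity),
    Real.norm_of_nonneg (by positivity), ← mul_assoc]
  gcongr
  exact norm_cexp_GammaH_exponent_le η hlam x

lemma norm_fderiv_GammaH_le (hlam : 0 ≤ lam) {x : E3} (hx : x ≠ 0) :
    ‖fderiv ℝ (GammaH lam η) x‖ ≤
      (4 * π)⁻¹ * ((‖x‖ ^ 2)⁻¹ + (‖sqrtNegMu lam η‖ + lam / 2) * ‖x‖⁻¹) *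
        Real.exp (-((sqrtNegMu lam η).im - lam / 2) * ‖x‖) := by
  rw [GammaH_eq_smul, fderiv_const_smul_field, Pi.smul_apply, norm_smul,
    Real.norm_of_nonneg (by positivity), mul_assoc]
  gcongr
  refine (norm_fderiv_yukawa_le _ _ hx).trans ?_
  rw [norm_mul, Complex.norm_I, one_mul]
  gcongr
  · exact norm_driftH_le hlam
  · exact norm_cexp_GammaH_exponent_le η hlam x

end GammaH

/-- **Pointwise estimates of `Γ_H^{η,λ}` and its gradient:** for `λ > 0`, `η₀ > 0` there are
`C, C₄ > 0` such that for all `|η| ≥ η₀` and `x ≠ 0`: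
`|Γ_H^{η,λ}(x)| ≤ C|x|⁻¹ e^{−C₄|η|^{1/2}|x|}` and
`|∇Γ_H^{η,λ}(x)| ≤ C(|x|⁻² + |η|^{1/2}|x|⁻¹) e^{−C₄|η|^{1/2}|x|}`. -/
theorem GammaH_pointwise_estimates (lam η₀ : ℝ) (hlam : 0 < lam) (hη₀ : 0 < η₀) :
    ∃ C > 0, ∃ C₄ > 0, ∀ η : ℝ, η₀ ≤ |η| → ∀ x : E3, x ≠ 0 →
      ‖GammaH lam η x‖ ≤ C * ‖x‖⁻¹ * Real.exp (-C₄ * |η| ^ ((1:ℝ)/2) * ‖x‖) ∧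
      ‖fderiv ℝ (GammaH lam η) x‖ ≤
        C * (‖x‖ ^ (-(2:ℝ)) + |η| ^ ((1:ℝ)/2) * ‖x‖⁻¹) *
          Real.exp (-C₄ * |η| ^ ((1:ℝ)/2) * ‖x‖) := by
  obtain ⟨M, hM, hbounds⟩ := exists_sqrtNegMu_bounds hlam.le hη₀
  refine ⟨(1 + 2 * M) / (4 * π), by positivity, 1 / (8 * M ^ 3), by positivity,
    fun η hη x hx => ?_⟩
  obtain ⟨hsize, hdecay⟩ := hbounds η hη
  rw [← Real.sqrt_eq_rpow, Real.rpow_neg (norm_nonneg x), Real.rpow_two]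
  have hexp : Real.exp (-((sqrtNegMu lam η).im - lam / 2) * ‖x‖) ≤
      Real.exp (-(1 / (8 * M ^ 3)) * √|η| * ‖x‖) := by
    rw [neg_mul, neg_mul, neg_mul, Real.exp_le_exp, neg_le_neg_iff, one_div_mul_eq_div]
    gcongr
  have hC : (1 + 2 * M) / (4 * π) = (4 * π)⁻¹ * (1 + 2 * M) := by ring
  have hC₁ : (4 * π)⁻¹ ≤ (1 + 2 * M) / (4 * π) := by
    rw [hC]
    exact le_mul_of_one_le_right (by positivity) (by linarith)
  have hcoef : (4 * π)⁻¹ * ((‖x‖ ^ 2)⁻¹ + (‖sqrtNegMu lam η‖ + lam / 2) * ‖x‖⁻¹) ≤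
      (1 + 2 * M) / (4 * π) * ((‖x‖ ^ 2)⁻¹ + √|η| * ‖x‖⁻¹) := by
    rw [hC, mul_assoc]
    gcongr
    nlinarith [inv_nonneg.2 (sq_nonneg ‖x‖), (by positivity : 0 ≤ √|η| * ‖x‖⁻¹),
      mul_le_mul_of_nonneg_right hsize (inv_nonneg.2 (norm_nonneg x))]
  exact ⟨(norm_GammaH_le η hlam.le x).trans (by gcongr),
    (norm_fderiv_GammaH_le η hlam.le hx).trans (by gcongr)⟩

end
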